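/- arXiv:1010.2031 — 3 statements merged into one kernel-verified Lean document; each statement's English description precedes it below -/
import Mathlib

section
/- Equip the poset of contexts with the Alexandrov (upper-set) topology, whose open sets are the upward closed sets of contexts. Then the projection π : Σ_* → contexts, (C,λ) ↦ C, is continuous and is a perfect map: it is a closed map (images under π of closed subsets of Σ_* are closed, i.e. downward closed, sets of contexts) and it has compact fibres (each fibre π⁻¹(C), homeomorphic to the compact space Σ_C, is compact). This is the external content of Corollary 2.21, which asserts that the internal Gelfand spectrum is a compact locale. -/
/-!
Preimages of upward closed sets of contexts are unions of whole fibres and are stable under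
extension of characters, so `π` is continuous. Dually, closed subsets of `Σ_*` are stable under
restriction of characters, so a context below one in `π K` already lies in `π K`. Each fibre is the
continuous image of the compact character space `Σ_C`.
-/

open WeakDual

variable (A : Type*) [CStarAlgebra A]

/-- A classical context: a commutative unital closed star-subalgebra of `A`. -/
structure Context where
  carrier : Subalgebra ℂ A
  star_mem' : ∀ x ∈ carrier, star x ∈ carrier
  isClosed' : IsClosed (carrier : Set A)
  mul_comm' : ∀ x ∈ carrier, ∀ y ∈ carrier, x * y = y * x

variable {A}

/-- The Gelfand spectrum of a context: the character space of `C`. -/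
abbrev Context.Spec (C : Context A) : Type _ := characterSpace ℂ C.carrier

/-- The inclusion of a smaller context into a larger one, as a continuous linear map. -/
def Context.inclCLM {D C : Context A} (h : D.carrier ≤ C.carrier) :
    D.carrier →L[ℂ] C.carrier where
  toLinearMap := (Subalgebra.inclusion h).toLinearMap
  cont := continuous_induced_rng.mpr continuous_subtype_val

/-- Restriction of a character along an inclusion of contexts. -/
noncomputable def Context.restrictChar {D C : Context A} (h : D.carrier ≤ C.carrier)
    (lam : C.Spec) : D.Spec :=
  ⟨(lam : WeakDual ℂ C.carrier).comp (Context.inclCLM h), by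
    constructor
    · intro h0
      have h1 : (lam : WeakDual ℂ C.carrier).comp (Context.inclCLM h) (1 : D.carrier) = 0 := by
        rw [h0]; rfl
      have h2 : (lam : WeakDual ℂ C.carrier).comp (Context.inclCLM h) (1 : D.carrier) = 1 := by
        show lam ((Context.inclCLM h) (1 : D.carrier)) = 1
        have h3 : (Context.inclCLM h) (1 : D.carrier) = (1 : C.carrier) := rfl
        rw [h3]
        exact map_one lam
      rw [h1] at h2
      exact zero_ne_one h2
    · intro x y
      show lam ((Context.inclCLM h) (x * y)) = lam ((Context.inclCLM h) x) * lam ((Context.inclCLM h) y)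
      have h4 : (Context.inclCLM h) (x * y) = (Context.inclCLM h) x * (Context.inclCLM h) y := rfl
      rw [h4]
      exact map_mul lam _ _⟩


/-- The disjoint union of all Gelfand spectra of contexts. -/
abbrev SigmaSpace (A : Type*) [CStarAlgebra A] : Type _ := (C : Context A) × C.Spec

/-- The Alexandrov topology on the poset of contexts: opens are the upward closed sets. -/
instance : TopologicalSpace (Context A) where
  IsOpen s := ∀ C ∈ s, ∀ D : Context A, C.carrier ≤ D.carrier → D ∈ s
  isOpen_univ := fun _ _ _ _ => trivial
  isOpen_inter := fun s t hs ht C hC D hD => ⟨hs C hC.1 D hD, ht C hC.2 D hD⟩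
  isOpen_sUnion := fun S hS C hC D hD => by
    obtain ⟨s, hsS, hCs⟩ := hC
    exact ⟨s, hsS, hS s hsS C hCs D hD⟩

/-- The topology `𝒪 Σ_*` of the covariant approach: a set is open iff each of its fibres
is open and it is closed under passing to extensions of characters. -/
instance : TopologicalSpace (SigmaSpace A) where
  IsOpen U := (∀ C : Context A, IsOpen {lam : C.Spec | Sigma.mk C lam ∈ U}) ∧
    ∀ (C C' : Context A) (h : C.carrier ≤ C'.carrier) (lam' : C'.Spec),
      Sigma.mk C (Context.restrictChar h lam') ∈ U → Sigma.mk C' lam' ∈ U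
  isOpen_univ := ⟨fun _ => isOpen_univ, fun _ _ _ _ _ => trivial⟩
  isOpen_inter := fun U V hU hV => ⟨fun C => (hU.1 C).inter (hV.1 C),
    fun C C' h lam hm => ⟨hU.2 C C' h lam hm.1, hV.2 C C' h lam hm.2⟩⟩
  isOpen_sUnion := fun S hS => by
    constructor
    · intro C
      have h1 : {lam : C.Spec | Sigma.mk C lam ∈ ⋃₀ S} =
          ⋃ U ∈ S, {lam : C.Spec | Sigma.mk C lam ∈ U} := by
        ext lam; simp
      rw [h1]
      exact isOpen_biUnion fun U hU => (hS U hU).1 C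
    · rintro C C' h lam ⟨U, hUS, hmU⟩
      exact ⟨U, hUS, (hS U hUS).2 C C' h lam hmU⟩

namespace Context

lemma isOpen_iff {s : Set (Context A)} :
    IsOpen s ↔ ∀ C ∈ s, ∀ D : Context A, C.carrier ≤ D.carrier → D ∈ s :=
  Iff.rfl

-- Makes the character space `C.Spec` compact (Banach–Alaoglu), giving compact fibres below.
instance completeSpace (C : Context A) : CompleteSpace C.carrier :=
  C.isClosed'.completeSpace_coe

end Context

namespace SigmaSpace

lemma isOpen_iff {U : Set (SigmaSpace A)} :
    IsOpen U ↔ (∀ C : Context A, IsOpen {lam : C.Spec | Sigma.mk C lam ∈ U}) ∧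
      ∀ (C C' : Context A) (h : C.carrier ≤ C'.carrier) (lam' : C'.Spec),
        Sigma.mk C (Context.restrictChar h lam') ∈ U → Sigma.mk C' lam' ∈ U :=
  Iff.rfl

lemma continuous_mk (C : Context A) : Continuous (Sigma.mk C : C.Spec → SigmaSpace A) :=
  continuous_def.2 fun _ hU => (isOpen_iff.1 hU).1 C

lemma mk_restrictChar_mem_of_isClosed {K : Set (SigmaSpace A)} (hK : IsClosed K)
    {C D : Context A} (h : C.carrier ≤ D.carrier) {lam' : D.Spec} (hmem : ⟨D, lam'⟩ ∈ K) :
    ⟨C, Context.restrictChar h lam'⟩ ∈ K := by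
  by_contra hnot
  exact (isOpen_iff.1 hK.isOpen_compl).2 C D h lam' hnot hmem

lemma continuous_fst : Continuous (fun p : SigmaSpace A => p.1) := by
  refine continuous_def.2 fun s hs => isOpen_iff.2 ⟨fun C => isOpen_const (p := C ∈ s), ?_⟩
  intro C C' h _ hC
  exact Context.isOpen_iff.1 hs C hC C' h

lemma isClosedMap_fst : IsClosedMap (fun p : SigmaSpace A => p.1) := by
  intro K hK
  refine isOpen_compl_iff.1 (Context.isOpen_iff.2 ?_)
  rintro C hC D hCD ⟨⟨_, lam'⟩, hmem, rfl⟩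
  exact hC ⟨_, mk_restrictChar_mem_of_isClosed hK hCD hmem, rfl⟩

lemma isCompact_fst_preimage_singleton (C : Context A) :
    IsCompact ((fun p : SigmaSpace A => p.1) ⁻¹' {C}) := by
  rw [← Set.range_sigmaMk]
  exact isCompact_range (continuous_mk C)

end SigmaSpace

/-- With the Alexandrov (upper-set) topology on the poset of contexts, the
projection `π : Σ_* → contexts` is continuous and perfect: it is a closed map and every
fibre `π⁻¹(C)` is compact. (Externally, this says that the internal Gelfand spectrum is a
compact locale.) -/
theorem statement10 :
    Continuous (fun p : SigmaSpace A => p.1) ∧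
    IsClosedMap (fun p : SigmaSpace A => p.1) ∧
    ∀ C : Context A, IsCompact ((fun p : SigmaSpace A => p.1) ⁻¹' {C}) :=
  ⟨SigmaSpace.continuous_fst, SigmaSpace.isClosedMap_fst,
    SigmaSpace.isCompact_fst_preimage_singleton⟩
end

section
/- Let F be a nonempty closed subset of Σ_*. Then F is irreducible (i.e. F cannot be written as the union of two closed proper subsets; equivalently, any two nonempty relatively open subsets of F intersect) if and only if the following two conditions hold: (1) for every context C, the fibre F_C contains at most one point; and (2) for all contexts C₁ and C₂ with F_{C₁} ≠ ∅ and F_{C₂} ≠ ∅, there exists a context C₃ with C₁ ⊆ C₃, C₂ ⊆ C₃ and F_{C₃} ≠ ∅. -/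
open WeakDual

variable (A : Type*) [CStarAlgebra A]

variable {A}

/- Closed sets of `Σ_*` are closed under restriction of characters, so two characters of `F`
with a common extension in `F` are pinned down by it once the fibres of `F` are subsingletons;
this gives irreducibility. Conversely, each open `V ⊆ Σ_C` generates the open set of all
characters on contexts `C' ⊇ C` restricting into `V`: if `F` is irreducible, the sets generated
by two disjoint neighbourhoods of distinct points of `F_C` cannot both meet `F`, and the sets
generated by `Σ_{C₁}` and `Σ_{C₂}` meet inside `F` at a context containing `C₁` and `C₂`. -/

namespace Context

theorem continuous_restrictChar {D C : Context A} (h : D.carrier ≤ C.carrier) :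
    Continuous (restrictChar h (A := A)) :=
  (WeakDual.continuous_of_continuous_eval fun x =>
    (WeakDual.eval_continuous (inclCLM h x)).comp continuous_subtype_val).subtype_mk _

end Context

theorem IsOpen.mk_mem_of_restrictChar_mem {U : Set (SigmaSpace A)} (hU : IsOpen U)
    {C C' : Context A} (h : C.carrier ≤ C'.carrier) {lam : C'.Spec}
    (hm : Sigma.mk C (Context.restrictChar h lam) ∈ U) : Sigma.mk C' lam ∈ U :=
  hU.2 C C' h lam hm

theorem IsClosed.restrictChar_mem {F : Set (SigmaSpace A)} (hF : IsClosed F)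
    {C C' : Context A} (h : C.carrier ≤ C'.carrier) {lam : C'.Spec}
    (hm : Sigma.mk C' lam ∈ F) : Sigma.mk C (Context.restrictChar h lam) ∈ F :=
  by_contra fun hc => hF.isOpen_compl.mk_mem_of_restrictChar_mem h hc hm

namespace SigmaSpace

/-- The fibre `F_C`. -/
def fibre (F : Set (SigmaSpace A)) (C : Context A) : Set C.Spec :=
  {lam | ⟨C, lam⟩ ∈ F}

/-- The smallest open set of `Σ_*` whose fibre over `C` contains `V`, for `V` open. -/
def extensionsOf (C : Context A) (V : Set C.Spec) : Set (SigmaSpace A) :=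
  {p | ∃ h : C.carrier ≤ p.1.carrier, Context.restrictChar h p.2 ∈ V}

theorem mk_mem_extensionsOf {C : Context A} {V : Set C.Spec} {lam : C.Spec} (hlam : lam ∈ V) :
    Sigma.mk C lam ∈ extensionsOf C V :=
  ⟨le_rfl, hlam⟩

theorem isOpen_extensionsOf (C : Context A) {V : Set C.Spec} (hV : IsOpen V) :
    IsOpen (extensionsOf C V) := by
  refine ⟨fun C' => ?_, fun C' C'' h lam ⟨h', hlam⟩ => ⟨h'.trans h, hlam⟩⟩
  by_cases hle : C.carrier ≤ C'.carrier
  · convert hV.preimage (Context.continuous_restrictChar hle) using 1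
    ext lam
    exact ⟨fun ⟨_, hlam⟩ => hlam, fun hlam => ⟨hle, hlam⟩⟩
  · convert isOpen_empty
    exact Set.eq_empty_of_forall_notMem fun _ ⟨h, _⟩ => hle h

variable {F : Set (SigmaSpace A)}

theorem IsPreirreducible.fibre_subsingleton (hF : IsPreirreducible F) (C : Context A) :
    (fibre F C).Subsingleton := by
  intro lam hlam mu hmu
  by_contra hne
  obtain ⟨V, W, hV, hW, hlamV, hmuW, hVW⟩ := t2_separation hne
  obtain ⟨⟨C', nu⟩, -, ⟨_, hnuV⟩, ⟨_, hnuW⟩⟩ :=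
    hF _ _ (isOpen_extensionsOf C hV) (isOpen_extensionsOf C hW)
      ⟨_, hlam, mk_mem_extensionsOf hlamV⟩ ⟨_, hmu, mk_mem_extensionsOf hmuW⟩
  exact Set.disjoint_iff.mp hVW ⟨hnuV, hnuW⟩

theorem IsPreirreducible.exists_fibre_nonempty (hF : IsPreirreducible F) {C₁ C₂ : Context A}
    (h₁ : (fibre F C₁).Nonempty) (h₂ : (fibre F C₂).Nonempty) :
    ∃ C₃ : Context A, C₁.carrier ≤ C₃.carrier ∧ C₂.carrier ≤ C₃.carrier ∧
      (fibre F C₃).Nonempty := by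
  obtain ⟨lam₁, hlam₁⟩ := h₁
  obtain ⟨lam₂, hlam₂⟩ := h₂
  obtain ⟨⟨C₃, lam₃⟩, hlam₃, ⟨hle₁, -⟩, ⟨hle₂, -⟩⟩ :=
    hF _ _ (isOpen_extensionsOf C₁ isOpen_univ) (isOpen_extensionsOf C₂ isOpen_univ)
      ⟨_, hlam₁, mk_mem_extensionsOf trivial⟩ ⟨_, hlam₂, mk_mem_extensionsOf trivial⟩
  exact ⟨C₃, hle₁, hle₂, lam₃, hlam₃⟩

theorem isPreirreducible_of_fibre_subsingleton_of_directed (hFcl : IsClosed F)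
    (hsub : ∀ C, (fibre F C).Subsingleton)
    (hdir : ∀ C₁ C₂ : Context A, (fibre F C₁).Nonempty → (fibre F C₂).Nonempty →
      ∃ C₃ : Context A, C₁.carrier ≤ C₃.carrier ∧ C₂.carrier ≤ C₃.carrier ∧
        (fibre F C₃).Nonempty) :
    IsPreirreducible F := by
  rintro U V hU hV ⟨⟨C₁, lam₁⟩, hlam₁, hU₁⟩ ⟨⟨C₂, lam₂⟩, hlam₂, hV₂⟩
  obtain ⟨C₃, hle₁, hle₂, lam₃, hlam₃⟩ := hdir C₁ C₂ ⟨lam₁, hlam₁⟩ ⟨lam₂, hlam₂⟩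
  have hres₁ : Context.restrictChar hle₁ lam₃ = lam₁ :=
    hsub C₁ (hFcl.restrictChar_mem hle₁ hlam₃) hlam₁
  have hres₂ : Context.restrictChar hle₂ lam₃ = lam₂ :=
    hsub C₂ (hFcl.restrictChar_mem hle₂ hlam₃) hlam₂
  exact ⟨⟨C₃, lam₃⟩, hlam₃, hU.mk_mem_of_restrictChar_mem hle₁ (hres₁ ▸ hU₁),
    hV.mk_mem_of_restrictChar_mem hle₂ (hres₂ ▸ hV₂)⟩

end SigmaSpace

open SigmaSpace

/-- A nonempty closed subset `F` of `Σ_*` is irreducible if and only if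
(1) every fibre `F_C` contains at most one point, and (2) the set of contexts with nonempty
fibre is upward directed. -/
theorem statement11 (F : Set (SigmaSpace A)) (hFcl : IsClosed F) (hFne : F.Nonempty) :
    IsIrreducible F ↔
      ((∀ C : Context A, {lam : C.Spec | (⟨C, lam⟩ : SigmaSpace A) ∈ F}.Subsingleton) ∧
        ∀ C₁ C₂ : Context A, {lam : C₁.Spec | (⟨C₁, lam⟩ : SigmaSpace A) ∈ F}.Nonempty →
          {lam : C₂.Spec | (⟨C₂, lam⟩ : SigmaSpace A) ∈ F}.Nonempty →
          ∃ C₃ : Context A, C₁.carrier ≤ C₃.carrier ∧ C₂.carrier ≤ C₃.carrier ∧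
            {lam : C₃.Spec | (⟨C₃, lam⟩ : SigmaSpace A) ∈ F}.Nonempty) :=
  ⟨fun hF => ⟨hF.2.fibre_subsingleton, fun _ _ => hF.2.exists_fibre_nonempty⟩,
    fun ⟨hsub, hdir⟩ =>
      ⟨hFne, isPreirreducible_of_fibre_subsingleton_of_directed hFcl hsub hdir⟩⟩
end

section
/- The map μ⁰_ψ satisfies: (0) for each open U ⊆ Σ_*, the function C ↦ μ⁰_ψ(U)(C) is order-preserving, i.e. C ⊆ C' implies μ⁰_ψ(U)(C) ≤ μ⁰_ψ(U)(C'); (1) monotonicity: if U ⊆ V are open then μ⁰_ψ(U)(C) ≤ μ⁰_ψ(V)(C) for every context C; (2) modularity: for all open U, V and every context C, μ⁰_ψ(U)(C) + μ⁰_ψ(V)(C) = μ⁰_ψ(U ∩ V)(C) + μ⁰_ψ(U ∪ V)(C); and (3) Scott continuity: for every nonempty family {U_i} of open subsets of Σ_* that is directed under inclusion and every context C, μ⁰_ψ(⋃_i U_i)(C) = sup_i μ⁰_ψ(U_i)(C). -/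
open WeakDual

variable (A : Type*) [CStarAlgebra A]

variable {A}

variable {H : Type*} [NormedAddCommGroup H] [InnerProductSpace ℂ H] [CompleteSpace H]

/-- The orthogonal projection of `H` onto the line `ℂ ∙ ψ`, as a bounded operator on `H`. -/
noncomputable def lineProjection (ψ : H) : H →L[ℂ] H :=
  (ℂ ∙ ψ).subtypeL ∘L (ℂ ∙ ψ).orthogonalProjectionOnto

open Classical in
/-- The pseudo-state pairing `μ⁰_ψ`: it takes the value `1` at `(U, C)` iff for every
context `C' ⊇ C` containing `p_ψ` the clopen set `X^{C'}_{p_ψ} = {λ : λ(p_ψ) = 1}` is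
contained in the fibre `U_{C'}`, and the value `0` otherwise. -/
noncomputable def mu0 (ψ : H) (U : Set (SigmaSpace (H →L[ℂ] H)))
    (C : Context (H →L[ℂ] H)) : ℝ :=
  if ∀ C' : Context (H →L[ℂ] H), C.carrier ≤ C'.carrier →
      ∀ hp : lineProjection ψ ∈ C'.carrier, ∀ lam : C'.Spec,
        lam ⟨lineProjection ψ, hp⟩ = 1 → (⟨C', lam⟩ : SigmaSpace (H →L[ℂ] H)) ∈ U
  then 1 else 0

/-!
A character `λ` of a context `C'` with `λ(p_ψ) = 1` is unique: every `a ∈ C'` commutes with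
`p_ψ`, hence leaves the line `ℂ ψ` invariant, so `a p_ψ = c p_ψ` for a scalar `c`, and then
`λ(a) = λ(a p_ψ) = c`. Hence among the points `(C', λ)` with `C ⊆ C'` and `λ(p_ψ) = 1` there
is at most one over the smallest context containing `C` and `p_ψ`, and all the others extend
it. For an open `U` the condition defining `μ⁰_ψ(U)(C) = 1` therefore only asks whether this
single point (if any) lies in `U`, and `U ↦ μ⁰_ψ(U)(C)` is the indicator of "`U` contains a
fixed subsingleton", which is monotone, modular and preserves nonempty unions.
-/

namespace Context

protected def sInf (S : Set (Context A)) (hS : S.Nonempty) : Context A where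
  carrier := sInf (Context.carrier '' S)
  star_mem' x hx := Algebra.mem_sInf.2 <| by
    rintro _ ⟨C, hC, rfl⟩
    exact C.star_mem' x (Algebra.mem_sInf.1 hx _ ⟨C, hC, rfl⟩)
  isClosed' := by
    rw [Algebra.coe_sInf]
    exact isClosed_biInter <| by rintro _ ⟨C, -, rfl⟩; exact C.isClosed'
  mul_comm' x hx y hy := by
    obtain ⟨C, hC⟩ := hS
    exact C.mul_comm' x (Algebra.mem_sInf.1 hx _ ⟨C, hC, rfl⟩) y
      (Algebra.mem_sInf.1 hy _ ⟨C, hC, rfl⟩)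

theorem sInf_le {S : Set (Context A)} (hS : S.Nonempty) {C : Context A} (hC : C ∈ S) :
    (Context.sInf S hS).carrier ≤ C.carrier :=
  fun _ hx => Algebra.mem_sInf.1 hx _ ⟨C, hC, rfl⟩

theorem mem_sInf {S : Set (Context A)} (hS : S.Nonempty) {x : A} :
    x ∈ (Context.sInf S hS).carrier ↔ ∀ C ∈ S, x ∈ C.carrier := by
  simp [Context.sInf, Algebra.mem_sInf]

end Context

theorem WeakDual.CharacterSpace.ext_of_mul_eq_smul {𝕜 B : Type*} [CommSemiring 𝕜]
    [TopologicalSpace 𝕜] [ContinuousAdd 𝕜] [ContinuousConstSMul 𝕜 𝕜]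
    [NonUnitalNonAssocSemiring B] [TopologicalSpace B] [Module 𝕜 B] {p : B}
    (hp : ∀ x, ∃ c : 𝕜, x * p = c • p) {φ χ : characterSpace 𝕜 B}
    (hφ : φ p = 1) (hχ : χ p = 1) : φ = χ := by
  refine WeakDual.CharacterSpace.ext fun x => ?_
  obtain ⟨c, hc⟩ := hp x
  have eval_eq : ∀ ω : characterSpace 𝕜 B, ω p = 1 → ω x = c := fun ω hω => by
    calc ω x = ω (x * p) := by rw [map_mul, hω, mul_one]
      _ = c := by rw [hc, map_smul, hω, smul_eq_mul, mul_one]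
  rw [eval_eq φ hφ, eval_eq χ hχ]

section

variable {E : Type*} [NormedAddCommGroup E] [InnerProductSpace ℂ E]

theorem lineProjection_eq_starProjection (ψ : E) :
    lineProjection ψ = (ℂ ∙ ψ).starProjection :=
  rfl

theorem exists_mul_lineProjection_eq_smul (ψ : E) {a : E →L[ℂ] E}
    (ha : a * lineProjection ψ = lineProjection ψ * a) :
    ∃ c : ℂ, a * lineProjection ψ = c • lineProjection ψ := by
  rw [lineProjection_eq_starProjection] at ha ⊢
  have haψ : a ψ ∈ ℂ ∙ ψ := by
    have hψ : (ℂ ∙ ψ).starProjection ψ = ψ :=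
      Submodule.starProjection_eq_self_iff.2 (Submodule.mem_span_singleton_self ψ)
    have : a ψ = (ℂ ∙ ψ).starProjection (a ψ) := by
      simpa only [ContinuousLinearMap.mul_def, ContinuousLinearMap.comp_apply, hψ]
        using congr($ha ψ)
    rw [this]
    exact Submodule.starProjection_apply_mem _ _
  obtain ⟨c, hc⟩ := Submodule.mem_span_singleton.1 haψ
  refine ⟨c, ContinuousLinearMap.ext fun x => ?_⟩
  obtain ⟨k, hk⟩ := Submodule.mem_span_singleton.1 (Submodule.starProjection_apply_mem (ℂ ∙ ψ) x)
  change a ((ℂ ∙ ψ).starProjection x) = c • (ℂ ∙ ψ).starProjection x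
  rw [← hk, map_smul, ← hc, smul_comm]

end

theorem Context.Spec.eq_of_apply_lineProjection {ψ : H} {C : Context (H →L[ℂ] H)}
    (hp : lineProjection ψ ∈ C.carrier) {φ χ : C.Spec}
    (hφ : φ ⟨_, hp⟩ = 1) (hχ : χ ⟨_, hp⟩ = 1) : φ = χ := by
  refine WeakDual.CharacterSpace.ext_of_mul_eq_smul (fun x => ?_) hφ hχ
  obtain ⟨c, hc⟩ := exists_mul_lineProjection_eq_smul ψ (C.mul_comm' x x.2 _ hp)
  exact ⟨c, Subtype.ext hc⟩

theorem Set.Subsingleton.subset_union_iff {α : Type*} {s : Set α} (hs : s.Subsingleton)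
    {t u : Set α} : s ⊆ t ∪ u ↔ s ⊆ t ∨ s ⊆ u := by
  rcases hs.eq_empty_or_singleton with rfl | ⟨x, rfl⟩ <;> simp

theorem Set.Subsingleton.subset_sUnion_iff {α : Type*} {s : Set α} (hs : s.Subsingleton)
    {𝒰 : Set (Set α)} (h𝒰 : 𝒰.Nonempty) : s ⊆ ⋃₀ 𝒰 ↔ ∃ t ∈ 𝒰, s ⊆ t := by
  rcases hs.eq_empty_or_singleton with rfl | ⟨x, rfl⟩
  · simpa [Set.Nonempty] using h𝒰
  · simp

open Classical in
theorem ite_one_zero_le_of_imp {p q : Prop} (h : p → q) :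
    (if p then (1 : ℝ) else 0) ≤ if q then 1 else 0 := by
  split_ifs <;> simp_all

open Classical in
theorem Real.iSup₂_ite_one_zero {α : Type*} (𝒰 : Set α) (P : α → Prop) :
    (⨆ t ∈ 𝒰, if P t then (1 : ℝ) else 0) = if ∃ t ∈ 𝒰, P t then 1 else 0 := by
  have hle : ∀ t, (⨆ _ : t ∈ 𝒰, if P t then (1 : ℝ) else 0) ≤ 1 := fun t =>
    Real.iSup_le (fun _ => by split_ifs <;> norm_num) zero_le_one
  split_ifs with h
  · obtain ⟨t, ht, hPt⟩ := h
    refine le_antisymm (Real.iSup_le hle zero_le_one) ?_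
    calc (1 : ℝ) = ⨆ _ : t ∈ 𝒰, if P t then (1 : ℝ) else 0 := by
          rw [if_pos hPt, ciSup_const (hι := ⟨ht⟩)]
      _ ≤ _ := le_ciSup ⟨1, Set.forall_mem_range.2 hle⟩ t
  · simp only [not_exists, not_and] at h
    refine le_antisymm (Real.iSup_le (fun t => Real.iSup_le (fun ht => ?_) le_rfl) le_rfl) ?_
    · rw [if_neg (h t ht)]
    · exact Real.iSup_nonneg fun t => Real.iSup_nonneg fun _ => by split_ifs <;> norm_num

/-- The union of the sets `X^{C'}_{p_ψ}` over all contexts `C' ⊇ C` containing `p_ψ`. -/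
def pointsAbove (ψ : H) (C : Context (H →L[ℂ] H)) : Set (SigmaSpace (H →L[ℂ] H)) :=
  {x | C.carrier ≤ x.1.carrier ∧ ∃ hp : lineProjection ψ ∈ x.1.carrier, x.2 ⟨_, hp⟩ = 1}

theorem pointsAbove_anti (ψ : H) {C C' : Context (H →L[ℂ] H)} (h : C.carrier ≤ C'.carrier) :
    pointsAbove ψ C' ⊆ pointsAbove ψ C :=
  fun _ ⟨hC', hx⟩ => ⟨h.trans hC', hx⟩

open Classical in
theorem mu0_eq_ite (ψ : H) (U : Set (SigmaSpace (H →L[ℂ] H))) (C : Context (H →L[ℂ] H)) :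
    mu0 ψ U C = if pointsAbove ψ C ⊆ U then 1 else 0 :=
  if_congr ⟨fun h x ⟨hC, hp, hx⟩ => h x.1 hC hp x.2 hx,
    fun h _ hC' hp _ hlam => h ⟨hC', hp, hlam⟩⟩ rfl rfl

theorem exists_subsingleton_forall_pointsAbove_subset_iff (ψ : H) (C : Context (H →L[ℂ] H)) :
    ∃ S : Set (SigmaSpace (H →L[ℂ] H)), S.Subsingleton ∧
      ∀ U, IsOpen U → (pointsAbove ψ C ⊆ U ↔ S ⊆ U) := by
  rcases (pointsAbove ψ C).eq_empty_or_nonempty with hempty | ⟨x, hxC, hp, hx⟩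
  · exact ⟨∅, Set.subsingleton_empty, fun U _ => by simp [hempty]⟩
  set T := {C' : Context (H →L[ℂ] H) | C.carrier ≤ C'.carrier ∧ lineProjection ψ ∈ C'.carrier}
  have hT : T.Nonempty := ⟨x.1, hxC, hp⟩
  set M := Context.sInf T hT
  have hCM : C.carrier ≤ M.carrier := fun _ hy => (Context.mem_sInf hT).2 fun _ hC' => hC'.1 hy
  have hpM : lineProjection ψ ∈ M.carrier := (Context.mem_sInf hT).2 fun _ hC' => hC'.2
  refine ⟨{⟨M, Context.restrictChar (Context.sInf_le hT ⟨hxC, hp⟩) x.2⟩},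
    Set.subsingleton_singleton, fun U hU => ?_⟩
  rw [Set.singleton_subset_iff]
  refine ⟨fun h => h ⟨hCM, hpM, hx⟩, fun h y ⟨hyC, hyp, hy⟩ => ?_⟩
  have hMy := Context.sInf_le hT ⟨hyC, hyp⟩
  refine hU.2 M y.1 hMy y.2 ?_
  rwa [Context.Spec.eq_of_apply_lineProjection hpM
    (φ := Context.restrictChar hMy y.2) (χ := Context.restrictChar _ x.2) hy hx]

open Classical in
theorem exists_subsingleton_forall_mu0_eq (ψ : H) (C : Context (H →L[ℂ] H)) :
    ∃ S : Set (SigmaSpace (H →L[ℂ] H)), S.Subsingleton ∧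
      ∀ U, IsOpen U → mu0 ψ U C = if S ⊆ U then 1 else 0 := by
  obtain ⟨S, hS, hpoints⟩ := exists_subsingleton_forall_pointsAbove_subset_iff ψ C
  exact ⟨S, hS, fun U hU => (mu0_eq_ite ψ U C).trans (if_congr (hpoints U hU) rfl rfl)⟩

theorem statement19_general (ψ : H) :
    (∀ U : Set (SigmaSpace (H →L[ℂ] H)), IsOpen U →
      ∀ C C' : Context (H →L[ℂ] H), C.carrier ≤ C'.carrier →
        mu0 ψ U C ≤ mu0 ψ U C') ∧
    (∀ U V : Set (SigmaSpace (H →L[ℂ] H)), IsOpen U → IsOpen V → U ⊆ V →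
      ∀ C : Context (H →L[ℂ] H), mu0 ψ U C ≤ mu0 ψ V C) ∧
    (∀ U V : Set (SigmaSpace (H →L[ℂ] H)), IsOpen U → IsOpen V →
      ∀ C : Context (H →L[ℂ] H),
        mu0 ψ U C + mu0 ψ V C = mu0 ψ (U ∩ V) C + mu0 ψ (U ∪ V) C) ∧
    (∀ 𝒰 : Set (Set (SigmaSpace (H →L[ℂ] H))), 𝒰.Nonempty → (∀ U ∈ 𝒰, IsOpen U) →
      DirectedOn (· ⊆ ·) 𝒰 →
      ∀ C : Context (H →L[ℂ] H), mu0 ψ (⋃₀ 𝒰) C = ⨆ U ∈ 𝒰, mu0 ψ U C) := by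
  classical
  refine ⟨fun U _ C C' hCC' => ?_, fun U V _ _ hUV C => ?_, fun U V hU hV C => ?_,
    fun 𝒰 h𝒰 hopen _ C => ?_⟩
  · simp only [mu0_eq_ite]
    exact ite_one_zero_le_of_imp (pointsAbove_anti ψ hCC').trans
  · simp only [mu0_eq_ite]
    exact ite_one_zero_le_of_imp fun h => h.trans hUV
  · obtain ⟨S, hS, hmu⟩ := exists_subsingleton_forall_mu0_eq ψ C
    simp only [hmu U hU, hmu V hV, hmu _ (hU.inter hV), hmu _ (hU.union hV),
      Set.subset_inter_iff, hS.subset_union_iff]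
    split_ifs <;> simp_all
  · obtain ⟨S, hS, hmu⟩ := exists_subsingleton_forall_mu0_eq ψ C
    simp only [hmu _ (isOpen_sUnion hopen), hS.subset_sUnion_iff h𝒰]
    rw [← Real.iSup₂_ite_one_zero]
    exact iSup_congr fun U => iSup_congr fun hU => (hmu U (hopen U hU)).symm

/-- Let `ψ` be a unit vector of the Hilbert space `H` and let
`A = B(H)`. The map `μ⁰_ψ` satisfies: (0) for each open `U`, the function `C ↦ μ⁰_ψ(U)(C)`
is order-preserving; (1) monotonicity in `U`; (2) modularity; and (3) Scott continuity with
respect to directed families of opens. -/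
theorem statement19 (ψ : H) (hψ : ‖ψ‖ = 1) :
    (∀ U : Set (SigmaSpace (H →L[ℂ] H)), IsOpen U →
      ∀ C C' : Context (H →L[ℂ] H), C.carrier ≤ C'.carrier →
        mu0 ψ U C ≤ mu0 ψ U C') ∧
    (∀ U V : Set (SigmaSpace (H →L[ℂ] H)), IsOpen U → IsOpen V → U ⊆ V →
      ∀ C : Context (H →L[ℂ] H), mu0 ψ U C ≤ mu0 ψ V C) ∧
    (∀ U V : Set (SigmaSpace (H →L[ℂ] H)), IsOpen U → IsOpen V →
      ∀ C : Context (H →L[ℂ] H),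
        mu0 ψ U C + mu0 ψ V C = mu0 ψ (U ∩ V) C + mu0 ψ (U ∪ V) C) ∧
    (∀ 𝒰 : Set (Set (SigmaSpace (H →L[ℂ] H))), 𝒰.Nonempty → (∀ U ∈ 𝒰, IsOpen U) →
      DirectedOn (· ⊆ ·) 𝒰 →
      ∀ C : Context (H →L[ℂ] H), mu0 ψ (⋃₀ 𝒰) C = ⨆ U ∈ 𝒰, mu0 ψ U C) :=
  statement19_general ψ
end
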